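/- If p is a complex polynomial of degree n and q(z) = z^n · conj(p(1/conj(z))) is its reciprocal polynomial, then for every z with |z| = 1, |p'(z)| + |q'(z)| ≤ n · max_{|w|=1} |p(w)|. -/

import Mathlib

open Polynomial Metric

noncomputable def polyMaxOn (p : Polynomial ℂ) (r : ℝ) : ℝ :=
  sSup ((fun z => ‖p.eval z‖) '' sphere (0 : ℂ) r)

/-!
Let `M = max_{|w|=1} |p(w)|`. By the maximum modulus principle applied to `q`, `|p(w)| ≤ M |w|^n`
for `|w| ≥ 1`, so for every `|c| > M` the polynomial `F = c z^n - p` has degree `n` and all its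
zeros in the open unit disc. For such `F` and `|z| = 1` each term of
`z F'(z) / F(z) = ∑ z / (z - a)` has real part `> 1/2`, whence `|n F(z) - z F'(z)| ≤ |F'(z)|`.
Here `n F - z F' = -(n p - z p')`, and `|n p(z) - z p'(z)| = |q'(z)|` on the unit circle, so
optimizing over `c` gives `|q'(z)| ≤ max (n M - |p'(z)|) 0`. The same argument with `p` and `q`
exchanged yields `|p'(z)| ≤ n M`, and the two bounds combine to the inequality.
-/

open ComplexConjugate

theorem norm_eval_le_polyMaxOn (p : ℂ[X]) {r : ℝ} {z : ℂ} (hz : z ∈ sphere (0 : ℂ) r) :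
    ‖p.eval z‖ ≤ polyMaxOn p r :=
  le_csSup ((isCompact_sphere 0 r).image (by fun_prop)).bddAbove (Set.mem_image_of_mem _ hz)

theorem polyMaxOn_nonneg (p : ℂ[X]) (r : ℝ) : 0 ≤ polyMaxOn p r :=
  Real.sSup_nonneg fun _ ⟨_, _, hx⟩ => hx ▸ norm_nonneg _

namespace Complex

theorem one_half_lt_re_div_sub {z a : ℂ} (h : ‖a‖ < ‖z‖) : 1 / 2 < (z / (z - a)).re := by
  -- `2 Re (z / (z - a)) - 1 = (‖z‖² - ‖a‖²) / ‖z - a‖²`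
  have hza : 0 < normSq (z - a) := normSq_pos.mpr (sub_ne_zero.mpr (by rintro rfl; exact h.false))
  have hsq : normSq a < normSq z := by
    rw [normSq_eq_norm_sq, normSq_eq_norm_sq]; gcongr
  rw [div_re, ← add_div, lt_div_iff₀ hza]
  simp only [normSq_apply, sub_re, sub_im] at hza hsq ⊢
  nlinarith

theorem norm_ofReal_sub_le_norm {r : ℝ} {w : ℂ} (hr : 0 ≤ r) (h : r / 2 ≤ w.re) :
    ‖(r : ℂ) - w‖ ≤ ‖w‖ := by
  rw [← sq_le_sq₀ (norm_nonneg _) (norm_nonneg _), Complex.sq_norm, Complex.sq_norm]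
  simp only [normSq_apply, sub_re, sub_im, ofReal_re, ofReal_im]
  nlinarith

theorem le_max_sub_norm_of_forall_lt_norm {x R : ℝ} {v : ℂ}
    (h : ∀ y : ℂ, R < ‖y‖ → x ≤ ‖y - v‖) : x ≤ max (R - ‖v‖) 0 := by
  by_cases hv : R < ‖v‖
  · exact le_max_of_le_right (by simpa using h v hv)
  push Not at hv
  refine le_max_of_le_left (le_sub_iff_add_le.mpr (le_of_forall_gt_imp_ge_of_dense fun t ht => ?_))
  set u := exp (arg v * I)
  have hu : ‖u‖ = 1 := norm_exp_ofReal_mul_I _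
  have ht0 : 0 ≤ t := (norm_nonneg v).trans (hv.trans ht.le)
  have hyv : (t : ℂ) * u - v = ((t - ‖v‖ : ℝ) : ℂ) * u := by
    push_cast; linear_combination norm_mul_exp_arg_mul_I v
  have := h (t * u) (by rwa [norm_mul, hu, mul_one, norm_real, Real.norm_of_nonneg ht0])
  rw [hyv, norm_mul, hu, mul_one, norm_real, Real.norm_of_nonneg (by linarith)] at this
  linarith

end Complex

namespace Polynomial

theorem eval_reflect {K : Type*} [Field K] {f : K[X]} {N : ℕ} (hf : f.natDegree ≤ N) {x : K}
    (hx : x ≠ 0) : (reflect N f).eval x = x ^ N * f.eval x⁻¹ := by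
  have : Invertible x⁻¹ := invertibleOfNonzero (inv_ne_zero hx)
  have h := eval₂_reflect_mul_pow (RingHom.id K) x⁻¹ N f hf
  rw [invOf_eq_inv, inv_inv] at h
  rw [← eval₂_id, ← eval₂_id, ← h, inv_pow, mul_comm,
    inv_mul_cancel_right₀ (pow_ne_zero N hx)]

theorem X_mul_derivative_reflect_add {R : Type*} [CommSemiring R] {f : R[X]} {N : ℕ}
    (hf : f.natDegree ≤ N) :
    X * derivative (reflect N f) + reflect N (X * derivative f) = C (N : R) * reflect N f := by
  refine induction_with_natDegree_le (fun f => X * derivative (reflect N f) +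
    reflect N (X * derivative f) = C (N : R) * reflect N f) N (by simp) ?_ ?_ f hf
  · intro k r _ hk
    obtain ⟨m, rfl⟩ := Nat.exists_eq_add_of_le hk
    have hX : ∀ (a : R) (j : ℕ), X * (C (a * j) * X ^ (j - 1)) = C (a * j) * X ^ j := by
      rintro a (_ | j)
      · simp
      · rw [Nat.add_sub_cancel, pow_succ]; ring
    simp only [reflect_C_mul_X_pow, revAt_le hk, Nat.add_sub_cancel_left, derivative_C_mul_X_pow,
      hX]
    simp only [Nat.cast_add, map_mul, map_add]
    ring
  · intro f g _ _ hf hg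
    simp only [derivative_add, reflect_add, mul_add, ← hf, ← hg]
    ring

theorem natDegree_X_mul_derivative_le {R : Type*} [Semiring R] (p : R[X]) :
    (X * derivative p).natDegree ≤ p.natDegree := by
  rcases eq_or_ne p.natDegree 0 with hp | hp
  · simp [derivative_of_natDegree_zero hp]
  · have := natDegree_derivative_le p
    have := natDegree_X_le (R := R)
    exact natDegree_mul_le.trans (by omega)

theorem natDegree_C_mul_X_pow_sub {R : Type*} [Ring R] {h : R[X]} {n : ℕ} {c : R}
    (hh : h.natDegree ≤ n) (hc : c ≠ h.coeff n) : (C c * X ^ n - h).natDegree = n := by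
  refine le_antisymm ((natDegree_sub_le _ _).trans (max_le ?_ hh)) (le_natDegree_of_ne_zero ?_)
  · exact natDegree_C_mul_X_pow_le c n
  · simpa [sub_eq_zero] using hc

theorem norm_eval_le_of_forall_norm_eq_one {p : ℂ[X]} {M : ℝ}
    (h : ∀ w : ℂ, ‖w‖ = 1 → ‖p.eval w‖ ≤ M) {z : ℂ} (hz : ‖z‖ ≤ 1) : ‖p.eval z‖ ≤ M := by
  refine Complex.norm_le_of_forall_mem_frontier_norm_le (U := ball 0 1) isBounded_ball
    p.differentiable.diffContOnCl (fun w hw => h w ?_) ?_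
  · rwa [frontier_ball 0 one_ne_zero, mem_sphere_zero_iff_norm] at hw
  · rwa [closure_ball 0 one_ne_zero, mem_closedBall_zero_iff]

theorem half_natDegree_le_re_mul_eval_derivative_div_eval {f : ℂ[X]} {z : ℂ}
    (hroots : ∀ a ∈ f.roots, ‖a‖ < ‖z‖) :
    (f.natDegree : ℝ) / 2 ≤ (z * f.derivative.eval z / f.eval z).re := by
  rcases eq_or_ne f 0 with rfl | hf
  · simp
  have hfz : f.eval z ≠ 0 := fun h => (hroots z ((mem_roots hf).mpr h)).false
  rw [mul_div_assoc, (IsAlgClosed.splits f).eval_derivative_div_eval_of_ne_zero hfz,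
    ← Multiset.sum_map_mul_left]
  change _ ≤ Complex.reAddGroupHom _
  rw [map_multiset_sum, Multiset.map_map]
  calc (f.natDegree : ℝ) / 2 = Multiset.card (f.roots.map _) • (1 / 2 : ℝ) := by
        rw [Multiset.card_map, IsAlgClosed.card_roots_eq_natDegree, nsmul_eq_mul, mul_one_div]
    _ ≤ _ := Multiset.card_nsmul_le_sum fun x hx => ?_
  obtain ⟨a, ha, rfl⟩ := Multiset.mem_map.mp hx
  simpa only [Function.comp_apply, Complex.coe_reAddGroupHom, mul_one_div]
    using (Complex.one_half_lt_re_div_sub (hroots a ha)).le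

theorem norm_natDegree_mul_eval_sub_le {f : ℂ[X]} {z : ℂ}
    (hroots : ∀ a ∈ f.roots, ‖a‖ < ‖z‖) :
    ‖(f.natDegree : ℂ) * f.eval z - z * f.derivative.eval z‖ ≤ ‖z * f.derivative.eval z‖ := by
  rcases eq_or_ne f 0 with rfl | hf
  · simp
  have hfz : f.eval z ≠ 0 := fun h => (hroots z ((mem_roots hf).mpr h)).false
  set w := z * f.derivative.eval z / f.eval z
  have hw : z * f.derivative.eval z = f.eval z * w := by rw [mul_div_cancel₀ _ hfz]
  have hre := half_natDegree_le_re_mul_eval_derivative_div_eval hroots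
  rw [hw, mul_comm (f.natDegree : ℂ), ← mul_sub, norm_mul, norm_mul,
    ← Complex.ofReal_natCast]
  gcongr
  exact Complex.norm_ofReal_sub_le_norm (Nat.cast_nonneg _) hre

theorem norm_lt_one_of_mem_roots_C_mul_X_pow_sub {h : ℂ[X]} {n : ℕ} {M : ℝ} {c a : ℂ}
    (hgrowth : ∀ w : ℂ, 1 ≤ ‖w‖ → ‖h.eval w‖ ≤ M * ‖w‖ ^ n) (hc : M < ‖c‖)
    (ha : a ∈ (C c * X ^ n - h).roots) : ‖a‖ < 1 := by
  by_contra! ha1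
  have hroot : h.eval a = c * a ^ n :=
    (by simpa [sub_eq_zero] using isRoot_of_mem_roots ha : c * a ^ n = h.eval a).symm
  have := hgrowth a ha1
  rw [hroot, norm_mul, norm_pow] at this
  have : 0 < ‖a‖ ^ n := by positivity
  nlinarith

theorem norm_natCast_mul_eval_sub_le_of_growth {h : ℂ[X]} {n : ℕ} {M : ℝ} {z : ℂ}
    (hn : n ≠ 0) (hh : h.natDegree ≤ n) (hlead : ‖h.coeff n‖ ≤ M)
    (hgrowth : ∀ w : ℂ, 1 ≤ ‖w‖ → ‖h.eval w‖ ≤ M * ‖w‖ ^ n) (hz : ‖z‖ = 1) :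
    ‖(n : ℂ) * h.eval z - z * h.derivative.eval z‖ ≤
      max (n * M - ‖h.derivative.eval z‖) 0 := by
  refine Complex.le_max_sub_norm_of_forall_lt_norm fun y hy => ?_
  have hz0 : z ≠ 0 := norm_ne_zero_iff.mp (hz.symm ▸ one_ne_zero)
  -- `c` is chosen so that `F = c X ^ n - h` has `F'(z) = y - h'(z)`.
  set c := y / (n * z ^ (n - 1))
  have hcy : c * (n * z ^ (n - 1)) = y := div_mul_cancel₀ _ (by simp [hn, hz0])
  have hc : M < ‖c‖ := by
    rwa [norm_div, norm_mul, norm_pow, hz, one_pow, mul_one, Complex.norm_natCast,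
      lt_div_iff₀ (by positivity), mul_comm]
  set F := C c * X ^ n - h
  have hFdeg : F.natDegree = n :=
    natDegree_C_mul_X_pow_sub hh fun hc' => by rw [← hc'] at hlead; linarith
  have hF := norm_natDegree_mul_eval_sub_le (f := F) (z := z)
    fun a ha => hz ▸ norm_lt_one_of_mem_roots_C_mul_X_pow_sub hgrowth hc ha
  have hF' : F.derivative.eval z = y - h.derivative.eval z := by
    rw [derivative_sub, derivative_C_mul_X_pow, eval_sub, eval_mul, eval_C, eval_pow, eval_X,
      ← hcy]
    ring
  have hFz : (n : ℂ) * F.eval z - z * F.derivative.eval z =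
      -((n : ℂ) * h.eval z - z * h.derivative.eval z) := by
    have hzn : z * z ^ (n - 1) = z ^ n := by rw [← pow_succ', Nat.sub_add_cancel (by omega)]
    rw [hF', ← hcy, eval_sub, eval_mul, eval_C, eval_pow, eval_X, ← hzn]
    ring
  rwa [hFdeg, hFz, norm_neg, hF', norm_mul, hz, one_mul] at hF

noncomputable def conjReflect (n : ℕ) (p : ℂ[X]) : ℂ[X] :=
  reflect n (p.map (starRingEnd ℂ))

section conjReflect

variable {n : ℕ} {p : ℂ[X]} {z : ℂ}

@[simp]
theorem conjReflect_conjReflect (n : ℕ) (p : ℂ[X]) : conjReflect n (conjReflect n p) = p := by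
  simp [conjReflect, reflect_map, map_map]

theorem coeff_conjReflect (n : ℕ) (p : ℂ[X]) (i : ℕ) :
    (conjReflect n p).coeff i = conj (p.coeff (revAt n i)) := by
  simp [conjReflect, coeff_reflect]

theorem natDegree_conjReflect_le (hp : p.natDegree ≤ n) : (conjReflect n p).natDegree ≤ n :=
  natDegree_reflect_le.trans (max_le le_rfl (by rwa [natDegree_map]))

theorem eval_conjReflect (hp : p.natDegree ≤ n) (hz : z ≠ 0) :
    (conjReflect n p).eval z = z ^ n * conj (p.eval (conj z)⁻¹) := by
  rw [conjReflect, eval_reflect (by rwa [natDegree_map]) hz, ← eval_map_apply, map_inv₀,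
    Complex.conj_conj]

theorem eq_conjReflect_of_eval {q : ℂ[X]} (hp : p.natDegree ≤ n)
    (hq : ∀ z : ℂ, z ≠ 0 → q.eval z = z ^ n * conj (p.eval (conj z)⁻¹)) :
    q = conjReflect n p :=
  eq_of_infinite_eval_eq _ _ <| (Set.finite_singleton 0).infinite_compl.mono fun z hz =>
    (hq z hz).trans (eval_conjReflect hp hz).symm

theorem eval_conjReflect_of_norm_eq_one (hp : p.natDegree ≤ n) (hz : ‖z‖ = 1) :
    (conjReflect n p).eval z = z ^ n * conj (p.eval z) := by
  rw [eval_conjReflect hp (norm_ne_zero_iff.mp (hz.symm ▸ one_ne_zero)), ← Complex.inv_eq_conj hz,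
    inv_inv]

theorem norm_eval_conjReflect_of_norm_eq_one (hp : p.natDegree ≤ n) (hz : ‖z‖ = 1) :
    ‖(conjReflect n p).eval z‖ = ‖p.eval z‖ := by
  rw [eval_conjReflect_of_norm_eq_one hp hz, norm_mul, norm_pow, hz, one_pow, one_mul,
    Complex.norm_conj]

theorem norm_eval_conjReflect_le {M : ℝ} (hp : p.natDegree ≤ n)
    (hM : ∀ w : ℂ, ‖w‖ ≤ 1 → ‖p.eval w‖ ≤ M) (hz : 1 ≤ ‖z‖) :
    ‖(conjReflect n p).eval z‖ ≤ M * ‖z‖ ^ n := by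
  have hz0 : z ≠ 0 := norm_pos_iff.mp (one_pos.trans_le hz)
  rw [eval_conjReflect hp hz0, norm_mul, norm_pow, Complex.norm_conj, mul_comm]
  gcongr
  exact hM _ (by rw [norm_inv, Complex.norm_conj]; exact inv_le_one_of_one_le₀ hz)

theorem X_mul_derivative_conjReflect_add (hp : p.natDegree ≤ n) :
    X * derivative (conjReflect n p) + conjReflect n (X * derivative p) =
      C (n : ℂ) * conjReflect n p := by
  simpa [conjReflect, derivative_map] using
    X_mul_derivative_reflect_add (f := p.map (starRingEnd ℂ)) (N := n) (by rwa [natDegree_map])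

theorem norm_eval_derivative_conjReflect (hp : p.natDegree ≤ n) (hz : ‖z‖ = 1) :
    ‖(conjReflect n p).derivative.eval z‖ = ‖(n : ℂ) * p.eval z - z * p.derivative.eval z‖ := by
  have h := congrArg (eval z) (X_mul_derivative_conjReflect_add hp)
  simp only [eval_add, eval_mul, eval_X, eval_C,
    eval_conjReflect_of_norm_eq_one hp hz,
    eval_conjReflect_of_norm_eq_one ((natDegree_X_mul_derivative_le p).trans hp) hz] at h
  have : z * (conjReflect n p).derivative.eval z =
      z ^ n * conj ((n : ℂ) * p.eval z - z * p.derivative.eval z) := by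
    rw [eq_sub_of_add_eq h, map_sub, map_mul, map_mul, map_natCast]; ring
  rw [← one_mul ‖_‖, ← hz, ← norm_mul, this, norm_mul, norm_pow, hz, one_pow, one_mul,
    Complex.norm_conj]

theorem norm_eval_derivative_conjReflect_le {M : ℝ} (hn : n ≠ 0) (hp : p.natDegree ≤ n)
    (hM : ∀ w : ℂ, ‖w‖ ≤ 1 → ‖(conjReflect n p).eval w‖ ≤ M) (hz : ‖z‖ = 1) :
    ‖(conjReflect n p).derivative.eval z‖ ≤ max (n * M - ‖p.derivative.eval z‖) 0 := by
  have hq := natDegree_conjReflect_le hp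
  rw [norm_eval_derivative_conjReflect hp hz]
  refine norm_natCast_mul_eval_sub_le_of_growth hn hp ?_ ?_ hz
  · rw [← conjReflect_conjReflect n p, coeff_conjReflect, revAt_le le_rfl, Nat.sub_self,
      Complex.norm_conj, coeff_zero_eq_eval_zero]
    exact hM 0 (by simp)
  · intro w hw
    simpa using norm_eval_conjReflect_le hq hM hw

end conjReflect

end Polynomial

theorem govil_rahman (p q : Polynomial ℂ) (n : ℕ) (hn : 1 ≤ n) (hdeg : p.natDegree = n)
    (hq : ∀ z : ℂ, z ≠ 0 →
      q.eval z = z ^ n * (starRingEnd ℂ) (p.eval ((starRingEnd ℂ) z)⁻¹)) :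
    ∀ z : ℂ, ‖z‖ = 1 →
      ‖(derivative p).eval z‖ + ‖(derivative q).eval z‖ ≤
        n * polyMaxOn p 1 := by
  intro z hz
  obtain rfl := eq_conjReflect_of_eval hdeg.le hq
  have hn0 : n ≠ 0 := Nat.one_le_iff_ne_zero.mp hn
  set M := polyMaxOn p 1
  have hnM : 0 ≤ n * M := mul_nonneg n.cast_nonneg (polyMaxOn_nonneg p 1)
  have hpM : ∀ w : ℂ, ‖w‖ = 1 → ‖p.eval w‖ ≤ M := fun w hw =>
    norm_eval_le_polyMaxOn p (mem_sphere_zero_iff_norm.mpr hw)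
  have hqM : ∀ w : ℂ, ‖w‖ = 1 → ‖(conjReflect n p).eval w‖ ≤ M := fun w hw =>
    (norm_eval_conjReflect_of_norm_eq_one hdeg.le hw).trans_le (hpM w hw)
  have hq' := norm_eval_derivative_conjReflect_le hn0 hdeg.le
    (fun w hw => norm_eval_le_of_forall_norm_eq_one hqM hw) hz
  have hp' := norm_eval_derivative_conjReflect_le hn0 (natDegree_conjReflect_le hdeg.le)
    (fun w hw => by simpa using norm_eval_le_of_forall_norm_eq_one hpM hw) hz
  rw [conjReflect_conjReflect] at hp'
  have bernstein : ‖(derivative p).eval z‖ ≤ n * M :=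
    hp'.trans (max_le (by linarith [norm_nonneg ((derivative (conjReflect n p)).eval z)]) hnM)
  linarith [hq'.trans_eq (max_eq_left (sub_nonneg.mpr bernstein))]
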